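/- arXiv:2512.23599 — 2 statements merged into one kernel-verified Lean document; each statement's English description precedes it below -/
import Mathlib

section
/- Let w : ∏_k A_k → ∏_k X_k be an n-partite process function, n ≥ 2. Then w is causal — i.e., every correlation it generates under arbitrary local strategies is a causal correlation — if and only if both of the following hold: (i) there exists a party k1 whose component is constant, i.e. w_{k1}(a_{∖k1}) = x_{k1}^0 for all a_{∖k1}; and (ii) for every party k1 with constant component and every a_{k1} ∈ A_{k1}, the output-reduced function w^{a_{k1}} : ∏_{j≠k1} A_j → ∏_{j≠k1} X_j is a causal (n−1)-partite process function. -/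
/-!
If `w` is causal, let every party receive a local intervention `f_k` as input, apply it and
announce the value `x_k` it was applied to: the generated correlation is the indicator of the
fixed points of `w ∘ f`. In its causal decomposition a party `k` acting first with positive weight
has its output determined by its own input alone, so `w_k(a)` depends only on `a_k`; since `w` is
non-self-signaling, `w_k` is constant. Every `w^b` is causal because its correlations are those of
`w` with party `k` given trivial input and output and always producing `b`, then traced out, and
causal correlations are stable under tracing out a party and under relabelling.

Conversely, if `w_k ≡ x₀` then party `k` acts first: the generated correlation is
`∑_b st_k(b, o_k | x₀, i_k) · P^b(o_{∖k} | i_{∖k})` with `P^b` generated by `w^b`, and causal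
correlations are stable under mixtures.
-/

noncomputable section

/-- A (multipartite) process function over an index type `ι`: for every local
intervention `f = (f_k)_k` (each `f_k : X_k → A_k`) there is exactly one
fixed point `x ∈ ∏_k X_k` with `w (f (x)) = x` (unique fixed-point property). -/
def IsProcessFunction {ι : Type} {A X : ι → Type}
    (w : (∀ k, A k) → ∀ k, X k) : Prop :=
  ∀ f : ∀ k, X k → A k, ∃! x : ∀ k, X k, (w fun k => f k (x k)) = x

/-- `w` is non-self-signaling: its `k`-th component does not depend on the
`k`-th party's own output. -/
def NonSelfSignaling {ι : Type} {A X : ι → Type}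
    (w : (∀ k, A k) → ∀ k, X k) : Prop :=
  ∀ (k : ι) (a a' : ∀ j, A j), (∀ j, j ≠ k → a j = a' j) → w a k = w a' k

/-- Extend a family defined on `{j // j ≠ k}` by a value at `k`. -/
def extendAt {ι : Type} [DecidableEq ι] {A : ι → Type} (k : ι)
    (a : ∀ j : {j : ι // j ≠ k}, A j) (b : A k) : ∀ j, A j :=
  fun j => if h : j = k then cast (congrArg A h).symm b else a ⟨j, h⟩

/-- The `k`-th component of a (non-self-signaling) `w`, as a function
`w_k : ∏_{j ≠ k} A_j → X_k` of the other parties' outputs. -/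
def component {ι : Type} [DecidableEq ι] {A X : ι → Type}
    [∀ k, Nonempty (A k)] (w : (∀ k, A k) → ∀ k, X k) (k : ι)
    (a : ∀ j : {j : ι // j ≠ k}, A j) : X k :=
  w (extendAt k a (Classical.arbitrary (A k))) k

/-- The reduced function `w^{f_k} : ∏_{j≠k} A_j → ∏_{j≠k} X_j`, defined by
`w^{f_k}(a_{∖k}) = w_{∖k}(a_{∖k}, f_k(w_k(a_{∖k})))`. -/
def reducedFn {ι : Type} [DecidableEq ι] {A X : ι → Type}
    [∀ k, Nonempty (A k)] (w : (∀ k, A k) → ∀ k, X k) (k : ι)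
    (f : X k → A k) (a : ∀ j : {j : ι // j ≠ k}, A j) :
    ∀ j : {j : ι // j ≠ k}, X j :=
  fun j => w (extendAt k a (f (component w k a))) j

/-- The output-reduced function `w^{a_k}`: the reduced function of the
constant intervention `f_k ≡ b`, `w^{b}(a_{∖k}) = w_{∖k}(a_{∖k}, b)`. -/
def outputReducedFn {ι : Type} [DecidableEq ι] {A X : ι → Type}
    [∀ k, Nonempty (A k)] (w : (∀ k, A k) → ∀ k, X k) (k : ι) (b : A k) :
    (∀ j : {j : ι // j ≠ k}, A j) → ∀ j : {j : ι // j ≠ k}, X j :=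
  reducedFn w k (fun _ => b)
open scoped BigOperators

/-- An `ι`-party correlation with input sets `I k` and output sets `O k`:
pointwise nonnegative and normalized for every joint input. -/
def IsCorrelation {ι : Type} [Fintype ι] [DecidableEq ι] {I O : ι → Type}
    [∀ k, Fintype (I k)] [∀ k, Fintype (O k)]
    (P : (∀ k, O k) → (∀ k, I k) → ℝ) : Prop :=
  (∀ o i, 0 ≤ P o i) ∧ (∀ i, ∑ o : ∀ k, O k, P o i = 1)

/-- Causal correlations, defined by recursion on the number of parties:
every 1-party correlation is causal; an `n`-party correlation (`n ≥ 2`) is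
causal if it decomposes as
`P(o|i) = Σ_k q_k · P_k(o_k|i_k) · P_{k,i_k,o_k}(o_{∖k}|i_{∖k})`
with weights `q_k ≥ 0`, `Σ_k q_k = 1`, 1-party correlations `P_k`, and
`(n−1)`-party causal correlations `P_{k,i_k,o_k}`. -/
inductive IsCausal :
    ∀ {ι : Type} [Fintype ι] [DecidableEq ι] {I O : ι → Type}
      [∀ k, Fintype (I k)] [∀ k, Fintype (O k)],
      ((∀ k, O k) → (∀ k, I k) → ℝ) → Prop
  | base {ι : Type} [Fintype ι] [DecidableEq ι] {I O : ι → Type}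
      [∀ k, Fintype (I k)] [∀ k, Fintype (O k)]
      (hcard : Fintype.card ι = 1)
      (P : (∀ k, O k) → (∀ k, I k) → ℝ) (hP : IsCorrelation P) :
      IsCausal P
  | step {ι : Type} [Fintype ι] [DecidableEq ι] {I O : ι → Type}
      [∀ k, Fintype (I k)] [∀ k, Fintype (O k)]
      (hcard : 2 ≤ Fintype.card ι)
      (P : (∀ k, O k) → (∀ k, I k) → ℝ) (hP : IsCorrelation P)
      (q : ι → ℝ) (hq : ∀ k, 0 ≤ q k) (hq1 : ∑ k, q k = 1)
      (Pk : ∀ k, O k → I k → ℝ)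
      (hPk : ∀ k, (∀ o i, 0 ≤ Pk k o i) ∧ ∀ i : I k, ∑ o : O k, Pk k o i = 1)
      (Q : ∀ k : ι, I k → O k →
        ((∀ j : {j : ι // j ≠ k}, O j) → (∀ j : {j : ι // j ≠ k}, I j) → ℝ))
      (hQ : ∀ k i o, IsCausal (Q k i o))
      (hdec : ∀ o i, P o i =
        ∑ k, q k * Pk k (o k) (i k) *
          Q k (i k) (o k) (fun j => o j) (fun j => i j)) :
      IsCausal P


/-- A process function `w` is causal if every correlation it generates under
arbitrary local strategies (with arbitrary finite external input/output sets)
is a causal correlation: the generated correlation is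
`P(o|i) = Σ_a ∏_k st_k(a_k, o_k | w_k(a_{∖k}), i_k)`. -/
def GeneratesCausal {ι : Type} [Fintype ι] [DecidableEq ι] {A X : ι → Type}
    [∀ k, Fintype (A k)] [∀ k, Nonempty (A k)] [∀ k, Fintype (X k)]
    (w : (∀ k, A k) → ∀ k, X k) : Prop :=
  ∀ (I O : ι → Type) [∀ k, Fintype (I k)] [∀ k, Nonempty (I k)]
    [∀ k, Fintype (O k)] [∀ k, Nonempty (O k)]
    (st : ∀ k, A k → O k → X k → I k → ℝ),
    (∀ k a o x i, 0 ≤ st k a o x i) →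
    (∀ k x i, ∑ a : A k, ∑ o : O k, st k a o x i = 1) →
    IsCausal (fun (o : ∀ k, O k) (i : ∀ k, I k) =>
      ∑ a : ∀ k, A k,
        ∏ k, st k (a k) (o k) (component w k (fun j => a j)) (i k))

open Finset

section ExtendAt

variable {ι : Type} [DecidableEq ι]

@[simp]
lemma extendAt_self {A : ι → Type} (k : ι) (a : ∀ j : {j : ι // j ≠ k}, A j) (b : A k) :
    extendAt k a b k = b := by
  simp [extendAt]

@[simp]
lemma extendAt_ne {A : ι → Type} (k : ι) (a : ∀ j : {j : ι // j ≠ k}, A j) (b : A k)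
    (j : {j : ι // j ≠ k}) : extendAt k a b j = a j := by
  simp [extendAt, j.prop]

lemma restrict_extendAt {A : ι → Type} (k : ι) (a : ∀ j : {j : ι // j ≠ k}, A j) (b : A k) :
    (fun j : {j : ι // j ≠ k} => extendAt k a b j) = a :=
  funext (extendAt_ne k a b)

lemma forall_extendAt {A : ι → Type} {p : ∀ m, A m → Prop} (k : ι)
    {a : ∀ j : {j : ι // j ≠ k}, A j} {b : A k} (hb : p k b)
    (ha : ∀ j : {j : ι // j ≠ k}, p j (a j)) (m : ι) : p m (extendAt k a b m) := by
  by_cases h : m = k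
  · subst h
    rwa [extendAt_self]
  · have := ha ⟨m, h⟩
    rwa [← extendAt_ne k a b ⟨m, h⟩] at this

lemma Fintype.sum_eq_sum_extendAt [Fintype ι] {B : ι → Type} [∀ m, Fintype (B m)] (k : ι)
    (f : (∀ m, B m) → ℝ) :
    ∑ a, f a = ∑ c : B k, ∑ a : ∀ j : {j : ι // j ≠ k}, B j, f (extendAt k a c) := by
  rw [← (Equiv.piSplitAt k B).symm.sum_comp, Fintype.sum_prod_type]
  congr! with c _ a
  funext m
  by_cases h : m = k
  · subst h; simp
  · simp [extendAt, h]

lemma Fintype.sum_eq_sum_restrict [Fintype ι] {B : ι → Type} [∀ m, Fintype (B m)] (k : ι)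
    (F : B k → (∀ j : {j : ι // j ≠ k}, B j) → ℝ) :
    ∑ b : ∀ m, B m, F (b k) (fun j => b j) = ∑ c, ∑ b, F c b := by
  simp [Fintype.sum_eq_sum_extendAt k]

lemma Fintype.card_subtype_ne [Fintype ι] (k : ι) :
    Fintype.card {j : ι // j ≠ k} = Fintype.card ι - 1 := by
  have := Fintype.card_subtype_compl (· = k)
  simp_all

def Equiv.subtypeNeComm (k : ι) (m : {j : ι // j ≠ k}) :
    {j : {j : ι // j ≠ k} // j ≠ m} ≃ {j : {j : ι // j ≠ m} // j ≠ ⟨k, m.prop.symm⟩} where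
  toFun j := ⟨⟨j.1.1, fun h => j.2 (Subtype.ext h)⟩, fun h => j.1.2 (congrArg Subtype.val h)⟩
  invFun j := ⟨⟨j.1.1, fun h => j.2 (Subtype.ext h)⟩, fun h => j.1.2 (congrArg Subtype.val h)⟩
  left_inv _ := rfl
  right_inv _ := rfl

lemma restrict_extendAt_eq_extendAt_subtypeNeComm {B : ι → Type} (k : ι)
    (m : {j : ι // j ≠ k}) (o : ∀ j : {j : ι // j ≠ k}, B j) (c : B k) :
    (fun j : {j : ι // j ≠ m} => extendAt k o c j) =
      extendAt (A := fun j : {j : ι // j ≠ m} => B j) ⟨k, m.prop.symm⟩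
        ((Equiv.subtypeNeComm k m).piCongr (fun _ => Equiv.refl _) fun j => o j) c := by
  funext j
  by_cases hj : j.val = k
  · obtain rfl : j = ⟨k, m.prop.symm⟩ := Subtype.ext hj
    simp
  · have hne : j ≠ ⟨k, m.prop.symm⟩ := fun h => hj (congrArg Subtype.val h)
    rw [extendAt_ne k o c ⟨j, hj⟩, extendAt_ne (A := fun j : {j : ι // j ≠ m} => B j) _ _ c
      ⟨j, hne⟩]
    exact (Equiv.piCongr_apply_apply (Equiv.subtypeNeComm k m)
      (Z := fun j : {j : {j : ι // j ≠ m} // j ≠ ⟨k, m.prop.symm⟩} => B j.1.1)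
      (fun _ => Equiv.refl _) (fun j => o j)
      ⟨⟨j, hj⟩, fun h => j.prop (congrArg Subtype.val h)⟩).symm

def extendFamily (k : ι) (F : {j : ι // j ≠ k} → Type) (m : ι) : Type :=
  if h : m = k then PUnit else F ⟨m, h⟩

instance {k : ι} {F : {j : ι // j ≠ k} → Type} [∀ j, Fintype (F j)] (m : ι) :
    Fintype (extendFamily k F m) := by
  unfold extendFamily
  split <;> infer_instance

instance {k : ι} {F : {j : ι // j ≠ k} → Type} [∀ j, Nonempty (F j)] (m : ι) :
    Nonempty (extendFamily k F m) := by
  unfold extendFamily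
  split <;> infer_instance

def extendFamilyEquiv (k : ι) (F : {j : ι // j ≠ k} → Type) (j : {j : ι // j ≠ k}) :
    extendFamily k F j ≃ F j :=
  Equiv.cast (dif_neg j.prop)

end ExtendAt

def Equiv.subtypeNe {ι₁ ι₂ : Type} (e : ι₁ ≃ ι₂) (k : ι₁) : {j // j ≠ k} ≃ {j // j ≠ e k} :=
  e.subtypeEquiv fun _ => e.injective.ne_iff.symm

lemma Equiv.restrict_piCongr {ι₁ ι₂ : Type} {W : ι₁ → Type} {Z : ι₂ → Type} (e : ι₁ ≃ ι₂)
    (f : ∀ k, W k ≃ Z (e k)) (k : ι₁) (o : ∀ k, W k) :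
    (fun j : {j // j ≠ e k} => e.piCongr f o j) =
      (e.subtypeNe k).piCongr (fun j => f j) fun j => o j := by
  funext j
  obtain ⟨j, rfl⟩ := (e.subtypeNe k).surjective j
  exact (e.piCongr_apply_apply f o j).trans
    (Equiv.piCongr_apply_apply (e.subtypeNe k) (Z := fun j : {j // j ≠ e k} => Z j)
      (fun j => f j) (fun j => o j) j).symm

section ProcessFunction

variable {ι : Type} {A X : ι → Type} {w : (∀ k, A k) → ∀ k, X k}

lemma IsProcessFunction.nonSelfSignaling (hw : IsProcessFunction w) : NonSelfSignaling w := by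
  classical
  intro k a a' hagree
  by_contra hne
  -- intervene with `a`, except that party `k` switches to `a' k` on the input `w a k`
  obtain ⟨x, hx, -⟩ := hw <| Function.update (fun j _ => a j) k
    fun y => if y = w a k then a' k else a k
  have hfx : (fun j => Function.update (fun j (_ : X j) => a j) k
      (fun y => if y = w a k then a' k else a k) j (x j)) =
      if x k = w a k then a' else a := by
    funext j
    by_cases hj : j = k
    · subst hj; split_ifs <;> simp_all
    · split_ifs <;> simp [hj, hagree j hj]
  rw [hfx] at hx
  split_ifs at hx with h
  · exact hne (h ▸ congrFun hx k ▸ rfl)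
  · exact h (congrFun hx k ▸ rfl)

variable [DecidableEq ι] [∀ k, Nonempty (A k)]

lemma NonSelfSignaling.component_eq (hw : NonSelfSignaling w) (k : ι) (a : ∀ j, A j) :
    component w k (fun j => a j) = w a k :=
  hw k _ a fun j hj => extendAt_ne k _ _ ⟨j, hj⟩

lemma NonSelfSignaling.outputReducedFn (hw : NonSelfSignaling w) (k : ι) (b : A k) :
    NonSelfSignaling (outputReducedFn w k b) := by
  intro j a a' h
  refine hw j _ _ fun m hm => ?_
  by_cases hmk : m = k
  · subst hmk; simp
  · exact (extendAt_ne k a b ⟨m, hmk⟩).trans <| (h _ fun e => hm (congrArg Subtype.val e)).trans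
      (extendAt_ne k a' b ⟨m, hmk⟩).symm

lemma component_outputReducedFn (hw : NonSelfSignaling w) (k : ι) (c : A k)
    (a : ∀ j : {j // j ≠ k}, A j) (j : {j // j ≠ k}) :
    component (outputReducedFn w k c) j (fun j' => a j') =
      component w j (fun j' => extendAt k a c j') := by
  rw [(hw.outputReducedFn k c).component_eq, hw.component_eq]
  rfl

lemma IsProcessFunction.outputReducedFn (hw : IsProcessFunction w) (k : ι) (b : A k) :
    IsProcessFunction (outputReducedFn w k b) := by
  intro g
  set f : ∀ m, X m → A m := extendAt (A := fun m => X m → A m) k g fun _ => b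
  have hf (y : ∀ m, X m) : (fun m => f m (y m)) = extendAt k (fun j => g j (y j)) b := by
    funext m
    by_cases h : m = k
    · subst h; simp [f]
    · exact (congrFun (extendAt_ne (A := fun m => X m → A m) k g _ ⟨m, h⟩) _).trans
        (extendAt_ne k (fun j => g j (y j)) b ⟨m, h⟩).symm
  obtain ⟨x, hx, hxu⟩ := hw f
  rw [hf] at hx
  refine ⟨fun j => x j, funext fun j => congrFun hx j, fun y hy => ?_⟩
  -- a fixed point `y` of the reduced function extends to one of `w`
  have hlift := hxu (extendAt k y (w (extendAt k (fun j => g j (y j)) b) k)) <| by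
    show w (fun m => f m _) = _
    simp only [hf, extendAt_ne]
    funext m
    by_cases h : m = k
    · subst h; simp
    · exact (congrFun hy ⟨m, h⟩).trans (extendAt_ne k y _ ⟨m, h⟩).symm
  rw [← hlift, restrict_extendAt]

end ProcessFunction

section CondDist

variable {α β T : Type*} [Fintype α] [Fintype T]

def IsCondDist (p : α → β → ℝ) : Prop :=
  (∀ o i, 0 ≤ p o i) ∧ ∀ i, ∑ o, p o i = 1

lemma IsCondDist.le_one {p : α → β → ℝ} (hp : IsCondDist p) (o : α) (i : β) : p o i ≤ 1 :=
  hp.2 i ▸ single_le_sum (fun o _ => hp.1 o i) (mem_univ o)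

lemma IsCondDist.eq_of_eq_one {p : α → β → ℝ} (hp : IsCondDist p) {a b : α} {i : β}
    (ha : p a i = 1) (hb : p b i = 1) : a = b := by
  by_contra hab
  have := add_le_sum (fun c _ => hp.1 c i) (mem_univ a) (mem_univ b) hab
  rw [hp.2 i, ha, hb] at this
  norm_num at this

lemma IsCondDist.mixture {p : T → α → β → ℝ} (hp : ∀ t, IsCondDist (p t)) {μ : T → ℝ}
    (hμ : ∀ t, 0 ≤ μ t) (hμ1 : ∑ t, μ t = 1) : IsCondDist fun o i => ∑ t, μ t * p t o i := by
  refine ⟨fun o i => sum_nonneg fun t _ => mul_nonneg (hμ t) ((hp t).1 o i), fun i => ?_⟩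
  rw [sum_comm]
  simp [← mul_sum, (hp _).2 i, hμ1]

def normalizeWeights (c : T → ℝ) : T → ℝ :=
  if ∑ t, c t = 0 then fun _ => (Fintype.card T : ℝ)⁻¹ else fun t => c t / ∑ s, c s

variable {c : T → ℝ}

lemma normalizeWeights_nonneg (hc : ∀ t, 0 ≤ c t) (t : T) : 0 ≤ normalizeWeights c t := by
  unfold normalizeWeights
  split_ifs
  · positivity
  · exact div_nonneg (hc t) (sum_nonneg fun s _ => hc s)

lemma sum_normalizeWeights [Nonempty T] : ∑ t, normalizeWeights c t = 1 := by
  unfold normalizeWeights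
  split_ifs with h
  · simp
  · rw [← sum_div, div_self h]

lemma sum_mul_sum_normalizeWeights_mul (hc : ∀ t, 0 ≤ c t) (F : T → ℝ) :
    (∑ t, c t) * ∑ t, normalizeWeights c t * F t = ∑ t, c t * F t := by
  rw [mul_sum]
  refine sum_congr rfl fun t _ => ?_
  rw [← mul_assoc]
  congr 1
  unfold normalizeWeights
  split_ifs with h
  · rw [h, zero_mul, (sum_eq_zero_iff_of_nonneg fun s _ => hc s).1 h t (mem_univ t)]
  · exact mul_div_cancel₀ _ h

end CondDist

lemma eq_one_of_sum_mul_eq_one {ι : Type*} [Fintype ι] {q t : ι → ℝ} (hq : ∀ k, 0 ≤ q k)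
    (hq1 : ∑ k, q k = 1) (ht : ∀ k, t k ≤ 1) (h : ∑ k, q k * t k = 1) {k : ι} (hk : q k ≠ 0) :
    t k = 1 := by
  have h0 : ∑ m, q m * (1 - t m) = 0 := by simp [mul_sub, sum_sub_distrib, hq1, h]
  have := (sum_eq_zero_iff_of_nonneg fun m _ => mul_nonneg (hq m) (sub_nonneg.2 (ht m))).1 h0 k
    (mem_univ k)
  linarith [(mul_eq_zero.1 this).resolve_left hk]

section Causal

variable {ι : Type} [Fintype ι] [DecidableEq ι] {I O : ι → Type}
  [∀ k, Fintype (I k)] [∀ k, Fintype (O k)]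

lemma IsCausal.isCorrelation {P : (∀ k, O k) → (∀ k, I k) → ℝ} (h : IsCausal P) :
    IsCorrelation P := by
  cases h <;> assumption

lemma IsCausal.card_pos {P : (∀ k, O k) → (∀ k, I k) → ℝ} (h : IsCausal P) :
    0 < Fintype.card ι := by
  cases h <;> omega

lemma IsCausal.exists_decomposition {P : (∀ k, O k) → (∀ k, I k) → ℝ} (h : IsCausal P)
    (hcard : 2 ≤ Fintype.card ι) :
    ∃ (q : ι → ℝ) (Pk : ∀ k, O k → I k → ℝ)
      (Q : ∀ k : ι, I k → O k →
        (∀ j : {j : ι // j ≠ k}, O j) → (∀ j : {j : ι // j ≠ k}, I j) → ℝ),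
      (∀ k, 0 ≤ q k) ∧ ∑ k, q k = 1 ∧ (∀ k, IsCondDist (Pk k)) ∧
      (∀ k i o, IsCausal (Q k i o)) ∧
      ∀ o i, P o i =
        ∑ k, q k * Pk k (o k) (i k) * Q k (i k) (o k) (fun j => o j) (fun j => i j) := by
  cases h with
  | base hc => omega
  | step _ _ _ q hq hq1 Pk hPk Q hQ hdec => exact ⟨q, Pk, Q, hq, hq1, hPk, hQ, hdec⟩

lemma IsCausal.of_decomposition (hcard : 2 ≤ Fintype.card ι) {P : (∀ k, O k) → (∀ k, I k) → ℝ}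
    (q : ι → ℝ) (hq : ∀ k, 0 ≤ q k) (hq1 : ∑ k, q k = 1)
    (Pk : ∀ k, O k → I k → ℝ) (hPk : ∀ k, IsCondDist (Pk k))
    (Q : ∀ k : ι, I k → O k →
      (∀ j : {j : ι // j ≠ k}, O j) → (∀ j : {j : ι // j ≠ k}, I j) → ℝ)
    (hQ : ∀ k i o, IsCausal (Q k i o))
    (hdec : ∀ o i, P o i =
      ∑ k, q k * Pk k (o k) (i k) * Q k (i k) (o k) (fun j => o j) (fun j => i j)) :
    IsCausal P := by
  refine .step hcard P ⟨fun o i => ?_, fun i => ?_⟩ q hq hq1 Pk hPk Q hQ hdec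
  · rw [hdec]
    exact sum_nonneg fun k _ => mul_nonneg (mul_nonneg (hq k) ((hPk k).1 _ _))
      ((hQ k _ _).isCorrelation.1 _ _)
  · simp_rw [hdec, mul_assoc]
    rw [sum_comm, ← hq1]
    refine sum_congr rfl fun k _ => ?_
    rw [← mul_sum, Fintype.sum_eq_sum_restrict k fun c o => Pk k c (i k) * Q k (i k) c o _]
    simp [← mul_sum, (hQ k _ _).isCorrelation.2, (hPk k).2]

lemma isCausal_prod (hcard : 0 < Fintype.card ι) {p : ∀ k, O k → I k → ℝ}
    (hp : ∀ k, IsCondDist (p k)) : IsCausal fun o i => ∏ k, p k (o k) (i k) := by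
  obtain ⟨N, hN⟩ : ∃ N, Fintype.card ι ≤ N := ⟨_, le_rfl⟩
  induction N generalizing ι with
  | zero => omega
  | succ N ih =>
    obtain h1 | h2 : Fintype.card ι = 1 ∨ 2 ≤ Fintype.card ι := by omega
    · refine .base h1 _ ⟨fun o i => prod_nonneg fun k _ => (hp k).1 _ _, fun i => ?_⟩
      show ∑ o : ∀ k, O k, ∏ k, p k (o k) (i k) = 1
      rw [← Fintype.prod_sum fun k c => p k c (i k)]
      exact prod_eq_one fun k _ => (hp k).2 _
    · have hcard' (k : ι) : Fintype.card {j // j ≠ k} = Fintype.card ι - 1 :=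
        Fintype.card_subtype_ne k
      have hpos : (Fintype.card ι : ℝ) ≠ 0 := by positivity
      refine .of_decomposition h2 (fun _ => (Fintype.card ι : ℝ)⁻¹) (fun _ => by positivity)
        (by simp [hpos]) p hp (fun k _ _ o i => ∏ j : {j // j ≠ k}, p j (o j) (i j))
        (fun k _ _ => ih (by rw [hcard']; omega) (fun j => hp j) (by rw [hcard']; omega))
        fun o i => ?_
      simp_rw [mul_assoc, ← Fintype.prod_eq_mul_prod_subtype_ne fun m => p m (o m) (i m)]
      simp [hpos]

theorem IsCausal.mixture {T : Type*} [Fintype T] {P : T → (∀ k, O k) → (∀ k, I k) → ℝ}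
    (hP : ∀ t, IsCausal (P t)) {μ : T → ℝ} (hμ : ∀ t, 0 ≤ μ t) (hμ1 : ∑ t, μ t = 1) :
    IsCausal fun o i => ∑ t, μ t * P t o i := by
  have hT : Nonempty T := by
    by_contra h
    simp [not_nonempty_iff.1 h] at hμ1
  obtain ⟨t₀⟩ := id hT
  obtain ⟨N, hN⟩ : ∃ N, Fintype.card ι ≤ N := ⟨_, le_rfl⟩
  induction N generalizing ι μ with
  | zero => have := (hP t₀).card_pos; omega
  | succ N ih =>
    obtain h1 | h2 : Fintype.card ι = 1 ∨ 2 ≤ Fintype.card ι := by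
      have := (hP t₀).card_pos; omega
    · exact .base h1 _ (IsCondDist.mixture (fun t => (hP t).isCorrelation) hμ hμ1)
    choose q Pk Q hq hq1 hPk hQ hdec using fun t => (hP t).exists_decomposition h2
    have hc (m : ι) (t : T) : 0 ≤ μ t * q t m := mul_nonneg (hμ t) (hq t m)
    have hc' (m : ι) (o : O m) (i : I m) (t : T) : 0 ≤ μ t * q t m * Pk t m o i :=
      mul_nonneg (hc m t) ((hPk t m).1 o i)
    -- merge, party by party, the `t`-indexed decompositions into one
    refine .of_decomposition h2 (fun m => ∑ t, μ t * q t m) (fun m => sum_nonneg fun t _ => hc m t)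
      ?_ (fun m o i => ∑ t, normalizeWeights (fun t => μ t * q t m) t * Pk t m o i)
      (fun m => IsCondDist.mixture (fun t => hPk t m) (normalizeWeights_nonneg (hc m))
        sum_normalizeWeights)
      (fun m i o o' i' =>
        ∑ t, normalizeWeights (fun t => μ t * q t m * Pk t m o i) t * Q t m i o o' i')
      (fun m i o => ih (fun t => hQ t m i o) (normalizeWeights_nonneg (hc' m o i))
        sum_normalizeWeights (by rw [Fintype.card_subtype_ne]; omega)) fun o i => ?_
    · rw [sum_comm]
      simp [← mul_sum, hq1, hμ1]
    · have hmerge (m : ι) : (∑ t, μ t * q t m) *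
          (∑ t, normalizeWeights (fun t => μ t * q t m) t * Pk t m (o m) (i m)) *
          ∑ t, normalizeWeights (fun t => μ t * q t m * Pk t m (o m) (i m)) t *
            Q t m (i m) (o m) (fun j => o j) (fun j => i j) =
          ∑ t, μ t * (q t m * Pk t m (o m) (i m) *
            Q t m (i m) (o m) (fun j => o j) (fun j => i j)) := by
        rw [sum_mul_sum_normalizeWeights_mul (hc m), sum_mul_sum_normalizeWeights_mul (hc' m _ _)]
        exact sum_congr rfl fun t _ => by ring
      rw [sum_congr rfl fun m _ => hmerge m]
      simp only [hdec, mul_sum]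
      exact sum_comm

lemma IsCausal.of_add_decomposition (hcard : 2 ≤ Fintype.card ι)
    {R : (∀ k, O k) → (∀ k, I k) → ℝ} (hR : IsCausal R) {P : (∀ k, O k) → (∀ k, I k) → ℝ}
    (r : ℝ) (hr : 0 ≤ r) (q : ι → ℝ) (hq : ∀ k, 0 ≤ q k) (hsum : r + ∑ k, q k = 1)
    (Pk : ∀ k, O k → I k → ℝ) (hPk : ∀ k, IsCondDist (Pk k))
    (Q : ∀ k : ι, I k → O k →
      (∀ j : {j : ι // j ≠ k}, O j) → (∀ j : {j : ι // j ≠ k}, I j) → ℝ)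
    (hQ : ∀ k i o, IsCausal (Q k i o))
    (hdec : ∀ o i, P o i = r * R o i +
      ∑ k, q k * Pk k (o k) (i k) * Q k (i k) (o k) (fun j => o j) (fun j => i j)) :
    IsCausal P := by
  have : Nonempty ι := Fintype.card_pos_iff.1 (by omega)
  set S : (∀ k, O k) → (∀ k, I k) → ℝ := fun o i => ∑ k, normalizeWeights q k *
    (Pk k (o k) (i k) * Q k (i k) (o k) (fun j => o j) (fun j => i j))
  have hS : IsCausal S := .of_decomposition hcard _ (normalizeWeights_nonneg hq)
    sum_normalizeWeights Pk hPk Q hQ fun _ _ => sum_congr rfl fun _ _ => (mul_assoc ..).symm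
  have hmix := IsCausal.mixture (P := fun b => bif b then R else S) (Bool.forall_bool.2 ⟨hS, hR⟩)
    (μ := fun b => bif b then r else ∑ k, q k) (Bool.forall_bool.2 ⟨sum_nonneg fun k _ => hq k, hr⟩)
    (by simpa [add_comm] using hsum)
  convert hmix using 1
  funext o i
  simp [hdec, S, sum_mul_sum_normalizeWeights_mul hq, mul_assoc]

theorem IsCausal.exists_output_determined {P : (∀ k, O k) → (∀ k, I k) → ℝ} (hP : IsCausal P)
    (hcard : 2 ≤ Fintype.card ι) :
    ∃ k, ∀ o o' i i', P o i = 1 → P o' i' = 1 → i k = i' k → o k = o' k := by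
  obtain ⟨q, Pk, Q, hq, hq1, hPk, hQ, hdec⟩ := hP.exists_decomposition hcard
  -- a party `k` that can act first
  obtain ⟨k, -, hk⟩ := exists_ne_zero_of_sum_ne_zero (hq1 ▸ one_ne_zero : ∑ k, q k ≠ 0)
  have hdet (o i) (h : P o i = 1) : Pk k (o k) (i k) = 1 := by
    have hQle (m : ι) := IsCondDist.le_one (hQ m (i m) (o m)).isCorrelation
      (fun j => o j) (fun j => i j)
    have ht := eq_one_of_sum_mul_eq_one hq hq1
      (fun m => mul_le_one₀ ((hPk m).le_one _ _) ((hQ m _ _).isCorrelation.1 _ _) (hQle m))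
      (by simpa only [hdec, mul_assoc] using h) hk
    exact le_antisymm ((hPk k).le_one _ _)
      (ht ▸ mul_le_of_le_one_right ((hPk k).1 _ _) (hQle k))
  exact ⟨k, fun o o' i i' h h' hi => (hPk k).eq_of_eq_one (hdet o i h) (hi ▸ hdet o' i' h')⟩

theorem IsCausal.piCongr {ι₂ : Type} [Fintype ι₂] [DecidableEq ι₂] {I₂ O₂ : ι₂ → Type}
    [∀ k, Fintype (I₂ k)] [∀ k, Fintype (O₂ k)] {P : (∀ k, O₂ k) → (∀ k, I₂ k) → ℝ}
    (hP : IsCausal P) {ι₁ : Type} [Fintype ι₁] [DecidableEq ι₁] {I₁ O₁ : ι₁ → Type}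
    [∀ k, Fintype (I₁ k)] [∀ k, Fintype (O₁ k)] (e : ι₁ ≃ ι₂)
    (fI : ∀ k, I₁ k ≃ I₂ (e k)) (fO : ∀ k, O₁ k ≃ O₂ (e k)) :
    IsCausal fun o i => P (e.piCongr fO o) (e.piCongr fI i) := by
  induction hP generalizing ι₁ with
  | base hcard P hP =>
    refine .base (by rwa [Fintype.card_congr e]) _ ⟨fun o i => hP.1 _ _, fun i => ?_⟩
    rw [← hP.2 (e.piCongr fI i)]
    exact Fintype.sum_equiv (e.piCongr fO) _ _ fun _ => rfl
  | step hcard P _ q hq hq1 Pk hPk Q hQ hdec ih =>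
    refine .of_decomposition (by rwa [Fintype.card_congr e]) (fun k => q (e k)) (fun k => hq _)
      (by rw [← hq1]; exact e.sum_comp q) (fun k o i => Pk (e k) (fO k o) (fI k i))
      (fun k => ⟨fun o i => (hPk _).1 _ _, fun i => ?_⟩)
      (fun k i o o' i' => Q (e k) (fI k i) (fO k o)
        ((e.subtypeNe k).piCongr (fun j => fO j) o')
        ((e.subtypeNe k).piCongr (fun j => fI j) i'))
      (fun k i o => ih _ _ _ (e.subtypeNe k) _ _) fun o i => ?_
    · rw [← (hPk (e k)).2 (fI k i)]
      exact Fintype.sum_equiv (fO k) _ _ fun _ => rfl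
    · rw [hdec, ← e.sum_comp]
      refine sum_congr rfl fun k _ => ?_
      rw [Equiv.piCongr_apply_apply, Equiv.piCongr_apply_apply, Equiv.restrict_piCongr,
        Equiv.restrict_piCongr]

lemma IsCorrelation.marginal {P : (∀ m, O m) → (∀ m, I m) → ℝ} (hP : IsCorrelation P) (k : ι)
    (d : I k) :
    IsCorrelation fun (o : ∀ j : {j // j ≠ k}, O j) (i : ∀ j : {j // j ≠ k}, I j) =>
      ∑ c, P (extendAt k o c) (extendAt k i d) := by
  refine ⟨fun o i => sum_nonneg fun c _ => hP.1 _ _, fun i => ?_⟩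
  rw [sum_comm, ← Fintype.sum_eq_sum_extendAt k fun o => P o (extendAt k i d), hP.2]

theorem IsCausal.marginal {P : (∀ m, O m) → (∀ m, I m) → ℝ} (hP : IsCausal P)
    (hcard : 2 ≤ Fintype.card ι) (k : ι) (d : I k) :
    IsCausal fun (o : ∀ j : {j // j ≠ k}, O j) (i : ∀ j : {j // j ≠ k}, I j) =>
      ∑ c, P (extendAt k o c) (extendAt k i d) := by
  induction hP with
  | base hc => omega
  | step _ P hPc q hq hq1 Pk hPk Q hQ hdec ih =>
    have hk := Fintype.card_subtype_ne k
    obtain h1 | h2 : Fintype.card {j // j ≠ k} = 1 ∨ 2 ≤ Fintype.card {j // j ≠ k} := by omega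
    · exact .base h1 _ (hPc.marginal k d)
    -- the `k`-th term becomes a mixture of the `Q k d c`, the others are marginalized recursively
    refine .of_add_decomposition h2
      (IsCausal.mixture (fun c => hQ k d c) (fun c => (hPk k).1 c d) ((hPk k).2 d)) (q k) (hq k)
      (fun j => q j) (fun j => hq j) (by rw [← hq1, Fintype.sum_eq_add_sum_subtype_ne _ k])
      (fun j => Pk j) (fun j => hPk j)
      (fun j i o o' i' => ∑ c, Q j i o
        (extendAt ⟨k, j.prop.symm⟩ ((Equiv.subtypeNeComm k j).piCongr (fun _ => .refl _) o') c)
        (extendAt ⟨k, j.prop.symm⟩ ((Equiv.subtypeNeComm k j).piCongr (fun _ => .refl _) i') d))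
      (fun j i o => (ih j i o (by rw [Fintype.card_subtype_ne]; omega) ⟨k, j.prop.symm⟩ d).piCongr
        (Equiv.subtypeNeComm k j) (fun _ => Equiv.refl _) (fun _ => Equiv.refl _)) fun o i => ?_
    simp only [hdec]
    rw [sum_comm, Fintype.sum_eq_add_sum_subtype_ne _ k]
    simp [restrict_extendAt_eq_extendAt_subtypeNeComm, mul_sum, mul_assoc]

end Causal

section Characterization

variable {ι : Type} [Fintype ι] [DecidableEq ι] {A X : ι → Type} [∀ k, Fintype (A k)]
  [∀ k, Nonempty (A k)]

def generatedCorr {I O : ι → Type} (w : (∀ k, A k) → ∀ k, X k)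
    (st : ∀ k, A k → O k → X k → I k → ℝ) : (∀ k, O k) → (∀ k, I k) → ℝ :=
  fun o i => ∑ a : ∀ k, A k, ∏ k, st k (a k) (o k) (component w k (fun j => a j)) (i k)

variable {w : (∀ k, A k) → ∀ k, X k}

lemma generatedCorr_eq_sum_extendAt {I O : ι → Type} (hw : NonSelfSignaling w) (k : ι)
    (st : ∀ k, A k → O k → X k → I k → ℝ) (o : ∀ k, O k) (i : ∀ k, I k) :
    generatedCorr w st o i = ∑ c : A k, ∑ a : ∀ j : {j // j ≠ k}, A j,
      st k c (o k) (component w k a) (i k) *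
        ∏ j : {j // j ≠ k}, st j (a j) (o j) (component (outputReducedFn w k c) j fun j' => a j')
          (i j) := by
  unfold generatedCorr
  rw [Fintype.sum_eq_sum_extendAt k]
  refine sum_congr rfl fun c _ => sum_congr rfl fun a _ => ?_
  rw [Fintype.prod_eq_mul_prod_subtype_ne _ k]
  simp [component_outputReducedFn hw]

open Classical in
def interventionStrategy {α ξ : Type} (a : α) (o x : ξ) (f : ξ → α) : ℝ :=
  if a = f x ∧ o = x then 1 else 0

open Classical in
lemma generatedCorr_interventionStrategy (hw : NonSelfSignaling w) (o : ∀ k, X k)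
    (f : ∀ k, X k → A k) :
    generatedCorr w (fun _ => interventionStrategy) o f =
      if w (fun k => f k (o k)) = o then 1 else 0 := by
  have hiff (a : ∀ k, A k) :
      (∀ k, a k = f k (w a k) ∧ o k = w a k) ↔ a = (fun k => f k (o k)) ∧ w a = o := by
    constructor
    · intro h
      have ho : w a = o := funext fun k => (h k).2.symm
      exact ⟨funext fun k => (h k).1.trans (by rw [ho]), ho⟩
    · rintro ⟨rfl, ho⟩ k
      exact ⟨by rw [ho], by rw [ho]⟩
  simp only [generatedCorr, interventionStrategy, hw.component_eq, prod_boole, mem_univ,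
    forall_const, hiff]
  simp [ite_and]

theorem GeneratesCausal.exists_const_component [∀ k, Fintype (X k)] [∀ k, Nonempty (X k)]
    (hw : NonSelfSignaling w) (hcard : 2 ≤ Fintype.card ι) (G : GeneratesCausal w) :
    ∃ (k : ι) (x₀ : X k), ∀ a, component w k a = x₀ := by
  classical
  obtain ⟨k, hk⟩ := (G (fun k => X k → A k) X (fun _ => interventionStrategy)
    (fun _ _ _ _ _ => by unfold interventionStrategy; split_ifs <;> norm_num)
    (fun _ _ _ => by simp [interventionStrategy, ite_and])).exists_output_determined hcard
  -- under the constant intervention `a`, the value `w a` is a fixed point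
  have hfix (a : ∀ k, A k) :
      generatedCorr w (fun _ => interventionStrategy) (w a) (fun k _ => a k) = 1 := by
    simp [generatedCorr_interventionStrategy hw]
  refine ⟨k, w (fun k => Classical.arbitrary _) k, fun a => hk _ _ _ _ (hfix _) (hfix _) ?_⟩
  funext
  exact extendAt_self ..

theorem GeneratesCausal.outputReducedFn [∀ k, Fintype (X k)] (hw : NonSelfSignaling w)
    (hcard : 2 ≤ Fintype.card ι) (G : GeneratesCausal w) (k : ι) (b : A k) :
    GeneratesCausal (outputReducedFn w k b) := by
  classical
  intro I O _ _ _ _ st h0 h1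
  show IsCausal (generatedCorr _ st)
  -- put party `k` back, with trivial input and output, always producing `b`
  let S (m : ι) := A m → extendFamily k O m → X m → extendFamily k I m → ℝ
  let o₀ : extendFamily k O k := Classical.arbitrary _
  let stExt : ∀ j : {j // j ≠ k}, S j := fun j a o x i =>
    st j a (extendFamilyEquiv k O j o) x (extendFamilyEquiv k I j i)
  let emit : S k := fun a o _ _ => if a = b ∧ o = o₀ then 1 else 0
  let st' := extendAt k stExt emit
  have h0' := forall_extendAt (p := fun m (s : S m) => ∀ a o x i, 0 ≤ s a o x i) k (a := stExt)
    (b := emit) (fun _ _ _ _ => by simp only [emit]; split_ifs <;> norm_num)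
    fun j _ _ _ _ => h0 j _ _ _ _
  have h1' := forall_extendAt (p := fun m (s : S m) => ∀ x i, ∑ a, ∑ o, s a o x i = 1) k
    (a := stExt) (b := emit) (fun _ _ => by simp [emit, ite_and]) fun j x i => by
      rw [← h1 j x (extendFamilyEquiv k I j i)]
      exact sum_congr rfl fun a _ => Fintype.sum_equiv (extendFamilyEquiv k O j) _ _ fun _ => rfl
  have hG : IsCausal (generatedCorr w st') := G _ _ st' h0' h1'
  have hP := (hG.marginal hcard k (Classical.arbitrary _)).piCongr
    (Equiv.refl _) (fun j => (extendFamilyEquiv k I j).symm)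
    (fun j => (extendFamilyEquiv k O j).symm)
  convert hP using 1
  funext o i
  have hrefl {W Z : {j // j ≠ k} → Type} (f : ∀ j, W j ≃ Z j) (x : ∀ j, W j) :
      (Equiv.refl _).piCongr f x = fun j => f j (x j) :=
    funext fun j => Equiv.piCongr_apply_apply (Equiv.refl _) f x j
  simp only [hrefl, generatedCorr_eq_sum_extendAt hw k, st', extendAt_self, extendAt_ne, emit,
    stExt, Equiv.apply_symm_apply]
  simp [ite_and, generatedCorr]

theorem generatesCausal_of_const_component [∀ k, Fintype (X k)] (hw : NonSelfSignaling w)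
    (hcard : 2 ≤ Fintype.card ι) (k : ι) (x₀ : X k) (hk : ∀ a, component w k a = x₀)
    (hred : ∀ b, GeneratesCausal (outputReducedFn w k b)) : GeneratesCausal w := by
  classical
  intro I O _ _ _ _ st h0 h1
  show IsCausal (generatedCorr w st)
  have hPv (c : A k) : IsCausal (generatedCorr (outputReducedFn w k c) fun j => st j) :=
    hred c _ _ _ (fun j => h0 j) (fun j => h1 j)
  -- party `k` acts first; the terms of the other parties get weight zero
  let pointMass (m : ι) : O m → I m → ℝ := fun o _ => if o = Classical.arbitrary _ then 1 else 0
  have hpm (m : ι) : IsCondDist (pointMass m) :=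
    ⟨fun _ _ => by simp only [pointMass]; split_ifs <;> norm_num, fun _ => by simp [pointMass]⟩
  let PQ (m : ι) := I m → O m → (∀ j : {j // j ≠ m}, O j) → (∀ j : {j // j ≠ m}, I j) → ℝ
  let Qk : PQ k := fun i o o' i' =>
    ∑ c, normalizeWeights (fun c => st k c o x₀ i) c *
      generatedCorr (outputReducedFn w k c) (fun j => st j) o' i'
  refine .of_decomposition hcard (Pi.single k 1) (fun m => ?_) (by simp)
    (extendAt (A := fun m => O m → I m → ℝ) k (fun j => pointMass j) fun o i => ∑ c, st k c o x₀ i)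
    (forall_extendAt (p := fun _ p => IsCondDist p) k
      ⟨fun o i => sum_nonneg fun c _ => h0 k c o x₀ i, fun i => by rw [sum_comm]; exact h1 k x₀ i⟩
      fun j => hpm j)
    (extendAt (A := PQ) k
      (fun j _ _ o' i' => ∏ j' : {j' // j' ≠ j.val}, pointMass j' (o' j') (i' j')) Qk)
    (forall_extendAt (p := fun m (Q : PQ m) => ∀ i o, IsCausal (Q i o)) k
      (fun i o => IsCausal.mixture hPv (normalizeWeights_nonneg fun c => h0 k c o x₀ i)
        sum_normalizeWeights)
      fun j _ _ => isCausal_prod (by rw [Fintype.card_subtype_ne]; omega) fun j' => hpm j')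
    fun o i => ?_
  · by_cases h : m = k <;> simp [h]
  · rw [Fintype.sum_eq_single k fun m hm => by simp [hm], generatedCorr_eq_sum_extendAt hw k]
    simp only [Pi.single_eq_same, one_mul, extendAt_self, Qk,
      sum_mul_sum_normalizeWeights_mul fun c => h0 k c (o k) x₀ (i k), hk, generatedCorr]
    simp only [mul_sum]

end Characterization

/-- **Characterization of causal process functions** (Theorem 2): an
`n`-partite process function `w` is causal iff (i) some party `k₁` has a
constant component `w_{k₁}`, and (ii) for every such party `k₁` and every
output value `a_{k₁}`, the output-reduced function `w^{a_{k₁}}` is a causal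
`(n−1)`-partite process function. -/
theorem causal_processFunction_characterization
    {n : ℕ} (hn : 2 ≤ n)
    (A X : Fin n → Type) [∀ k, Fintype (A k)] [∀ k, Nonempty (A k)]
    [∀ k, Fintype (X k)] [∀ k, Nonempty (X k)]
    (w : (∀ k, A k) → ∀ k, X k) (hw : IsProcessFunction w) :
    GeneratesCausal w ↔
      ((∃ (k : Fin n) (x0 : X k), ∀ a, component w k a = x0) ∧
        (∀ k : Fin n, (∃ x0 : X k, ∀ a, component w k a = x0) →
          ∀ b : A k,
            IsProcessFunction (outputReducedFn w k b) ∧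
              GeneratesCausal (outputReducedFn w k b))) := by
  have hnss := hw.nonSelfSignaling
  have hcard : 2 ≤ Fintype.card (Fin n) := by rwa [Fintype.card_fin]
  refine ⟨fun G => ⟨G.exists_const_component hnss hcard, fun k _ b =>
    ⟨hw.outputReducedFn k b, G.outputReducedFn hnss hcard k b⟩⟩, ?_⟩
  rintro ⟨⟨k, x₀, hk⟩, hred⟩
  exact generatesCausal_of_const_component hnss hcard k x₀ hk fun b => (hred k ⟨x₀, hk⟩ b).2

end
end

section
/- Let an unambiguous complete product basis be given. Then its events satisfy pairwise exclusivity: for any two distinct events j ≠ j' there exists a party k such that x_k^j = x_k^{j'} and a_k^j ≠ a_k^{j'}. -/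
open scoped InnerProductSpace

theorem setting_eq_and_outcome_ne_of_inner_eq_zero {𝕜 E X A : Type*} [RCLike 𝕜]
    [NormedAddCommGroup E] [InnerProductSpace 𝕜 E] {v : X → A → E} {x x' : X} {a a' : A}
    (hv : v x a ≠ 0) (hunamb : v x a ≠ v x' a' → (⟪v x a, v x' a'⟫_𝕜 = 0 ↔ x = x'))
    (h : ⟪v x a, v x' a'⟫_𝕜 = 0) : x = x' ∧ a ≠ a' := by
  have hne : v x a ≠ v x' a' := by
    rintro heq
    rw [← heq] at h
    exact inner_self_ne_zero.mpr hv h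
  have hx : x = x' := (hunamb hne).mp h
  refine ⟨hx, fun ha => hne ?_⟩
  rw [hx, ha]

theorem unambiguous_basis_pairwise_exclusivity_general
    -- `n` parties with local dimensions `d k`
    {n : ℕ} (d : Fin n → ℕ)
    -- outcome sets `A k` with `|A k| = d k`, finite nonempty setting sets `X k`
    (A : Fin n → Type)
    (X : Fin n → Type)
    -- local vectors `|(a_k|x_k)⟩`, an orthonormal basis for each setting
    (v : ∀ k : Fin n, X k → A k → EuclideanSpace ℂ (Fin (d k)))
    (hv : ∀ (k : Fin n) (x : X k), Orthonormal ℂ (v k x))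
    -- `N = ∏_k d_k` pairwise distinct events with pairwise orthogonal
    -- product vectors (a complete product basis)
    {N : ℕ}
    (e : Fin N → (∀ k, A k) × (∀ k, X k))
    (horth : ∀ j j' : Fin N, j ≠ j' →
      (∏ k : Fin n,
        (inner ℂ (v k ((e j).2 k) ((e j).1 k))
          (v k ((e j').2 k) ((e j').1 k)) : ℂ)) = 0)
    -- unambiguity: for labels occurring among the events, two distinct local
    -- vectors are orthogonal iff they belong to the same setting
    (hunamb : ∀ (k : Fin n) (a a' : A k) (x x' : X k),
      (∃ j, (e j).1 k = a ∧ (e j).2 k = x) →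
      (∃ j, (e j).1 k = a' ∧ (e j).2 k = x') →
      v k x a ≠ v k x' a' →
      ((inner ℂ (v k x a) (v k x' a') : ℂ) = 0 ↔ x = x'))
    :
    ∀ j j' : Fin N, j ≠ j' →
      ∃ k : Fin n, (e j).2 k = (e j').2 k ∧ (e j).1 k ≠ (e j').1 k := by
  intro j j' hjj'
  obtain ⟨k, -, hk⟩ := Finset.prod_eq_zero_iff.mp (horth j j' hjj')
  exact ⟨k, setting_eq_and_outcome_ne_of_inner_eq_zero ((hv k _).ne_zero _)
    (hunamb k _ _ _ _ ⟨j, rfl, rfl⟩ ⟨j', rfl, rfl⟩) hk⟩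

/-- **Pairwise exclusivity** (Lemma B.2): the events of an unambiguous
complete product basis satisfy pairwise exclusivity: any two distinct events
agree on some party's setting while differing in that party's outcome. -/
theorem unambiguous_basis_pairwise_exclusivity
    -- `n` parties with local dimensions `d k`
    {n : ℕ} (hn : 1 ≤ n) (d : Fin n → ℕ) (hd : ∀ k, 1 ≤ d k)
    -- outcome sets `A k` with `|A k| = d k`, finite nonempty setting sets `X k`
    (A : Fin n → Type) [∀ k, Fintype (A k)] [∀ k, DecidableEq (A k)]
    (hA : ∀ k, Fintype.card (A k) = d k)
    (X : Fin n → Type) [∀ k, Fintype (X k)] [∀ k, Nonempty (X k)]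
    [∀ k, DecidableEq (X k)]
    -- local vectors `|(a_k|x_k)⟩`, an orthonormal basis for each setting
    (v : ∀ k : Fin n, X k → A k → EuclideanSpace ℂ (Fin (d k)))
    (hv : ∀ (k : Fin n) (x : X k), Orthonormal ℂ (v k x))
    -- `N = ∏_k d_k` pairwise distinct events with pairwise orthogonal
    -- product vectors (a complete product basis)
    {N : ℕ} (hN : N = ∏ k, d k)
    (e : Fin N → (∀ k, A k) × (∀ k, X k))
    (he : Function.Injective e)
    (horth : ∀ j j' : Fin N, j ≠ j' →
      (∏ k : Fin n,
        (inner ℂ (v k ((e j).2 k) ((e j).1 k))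
          (v k ((e j').2 k) ((e j').1 k)) : ℂ)) = 0)
    -- unambiguity: for labels occurring among the events, two distinct local
    -- vectors are orthogonal iff they belong to the same setting
    (hunamb : ∀ (k : Fin n) (a a' : A k) (x x' : X k),
      (∃ j, (e j).1 k = a ∧ (e j).2 k = x) →
      (∃ j, (e j).1 k = a' ∧ (e j).2 k = x') →
      v k x a ≠ v k x' a' →
      ((inner ℂ (v k x a) (v k x' a') : ℂ) = 0 ↔ x = x'))
    :
    ∀ j j' : Fin N, j ≠ j' →
      ∃ k : Fin n, (e j).2 k = (e j').2 k ∧ (e j).1 k ≠ (e j').1 k :=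
  unambiguous_basis_pairwise_exclusivity_general d A X v hv e horth hunamb
end
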